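/- Let f be a polynomial on ℝ^4 of degree at most t. Then the function I_π f on S^2 defined by fiberwise averaging f over Hopf fibers is the restriction to S^2 of a polynomial on ℝ^3 of degree at most ⌊t/2⌋. Moreover, the map I_π surjects P_t(S^3) onto P_{⌊t/2⌋}(S^2). -/

import Mathlib

/-!
Write `a = x₀ + i x₁`, `b = x₂ + i x₃` and express a polynomial on `ℝ⁴` in the coordinates
`(a, ā, b, b̄)`. The fibre rotation multiplies the monomial `a^p ā^q b^r b̄^s` by
`e^{i(p - q + r - s)θ}`, so averaging over a fibre keeps exactly the monomials with `p + r = q + s`.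
Such a monomial of degree `d` is a product of `d / 2` of the quadrics `aā, bb̄, ab̄, āb`, and on `S³`
these are affine functions of the Hopf map `y = (|a|² - |b|², 2ab̄)`. The average is real, so the
real part of the resulting polynomial in `y` is the required one. Conversely, `q ∘ π` is a
polynomial of degree `2 deg q` that is constant on the fibres.
-/

open Real MvPolynomial

/-- A point of `ℝ⁴ ≅ ℂ²` multiplied componentwise by `e^{iθ}` (rotation along the Hopf
fiber through it). -/
noncomputable def hopfRot (x : Fin 4 → ℝ) (θ : ℝ) : Fin 4 → ℝ :=
  ![x 0 * Real.cos θ - x 1 * Real.sin θ, x 0 * Real.sin θ + x 1 * Real.cos θ,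
    x 2 * Real.cos θ - x 3 * Real.sin θ, x 2 * Real.sin θ + x 3 * Real.cos θ]

/-- The Hopf map `ℝ⁴ ≅ ℂ² → ℝ³ ≅ ℝ × ℂ`, `(a,b) ↦ (|a|²-|b|², 2·a·conj b)`. -/
def hopfMapE (x : Fin 4 → ℝ) : Fin 3 → ℝ :=
  ![x 0 ^ 2 + x 1 ^ 2 - x 2 ^ 2 - x 3 ^ 2,
    2 * (x 0 * x 2 + x 1 * x 3), 2 * (x 1 * x 2 - x 0 * x 3)]

namespace MvPolynomial

theorem totalDegree_aeval_le {σ τ R S : Type*} [CommSemiring R] [CommSemiring S] [Algebra R S]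
    {g : σ → MvPolynomial τ S} {k : ℕ} (hg : ∀ i, (g i).totalDegree ≤ k)
    (p : MvPolynomial σ R) : (aeval g p).totalDegree ≤ k * p.totalDegree := by
  conv_lhs => rw [p.as_sum]
  rw [map_sum]
  refine totalDegree_finsetSum_le fun α hα => ?_
  rw [aeval_monomial, algebraMap_apply]
  calc _ ≤ (α.prod fun i e => g i ^ e).totalDegree :=
        (totalDegree_mul _ _).trans (by rw [totalDegree_C, zero_add])
    _ ≤ ∑ i ∈ α.support, k * α i :=
        (totalDegree_finsetProd _ _).trans <| Finset.sum_le_sum fun i _ =>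
          (totalDegree_pow _ _).trans (by rw [mul_comm]; exact Nat.mul_le_mul_right _ (hg i))
    _ = k * α.sum fun _ e => e := by rw [Finsupp.sum, Finset.mul_sum]
    _ ≤ k * p.totalDegree := Nat.mul_le_mul_left _ (le_totalDegree hα)

theorem eval_aeval {σ τ R S : Type*} [CommSemiring R] [CommSemiring S] [Algebra R S]
    (z : τ → S) (g : σ → MvPolynomial τ S) (p : MvPolynomial σ R) :
    eval z (aeval g p) = aeval (fun i => eval z (g i)) p := by
  have hC : (eval z).comp (algebraMap R (MvPolynomial τ S)) = algebraMap R S :=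
    RingHom.ext fun r => by rw [RingHom.comp_apply, algebraMap_apply, eval_C]
  rw [map_aeval, hC, aeval_eq_eval₂Hom]

theorem exists_totalDegree_le_eval_eq_of_monomial {σ τ ι R : Type*} [CommSemiring R]
    (p : MvPolynomial σ R) {k : ℕ} (S : Set ι) (u : ι → σ → R) (v : ι → τ → R)
    (h : ∀ α ∈ p.support, ∃ Q : MvPolynomial τ R, Q.totalDegree ≤ k ∧
      ∀ x ∈ S, eval (v x) Q = eval (u x) (monomial α 1)) :
    ∃ Q : MvPolynomial τ R, Q.totalDegree ≤ k ∧ ∀ x ∈ S, eval (v x) Q = eval (u x) p := by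
  choose! Q hQdeg hQ using h
  refine ⟨∑ α ∈ p.support, C (p.coeff α) * Q α, totalDegree_finsetSum_le fun α hα =>
    (totalDegree_mul _ _).trans (by simpa using hQdeg α hα), fun x hx => ?_⟩
  conv_rhs => rw [p.as_sum]
  simp only [map_sum]
  refine Finset.sum_congr rfl fun α hα => ?_
  rw [map_mul, eval_C, hQ α hα x hx]
  simp [eval_monomial]

theorem exists_totalDegree_le_eval_eq_re {σ K : Type*} [RCLike K] (Q : MvPolynomial σ K) :
    ∃ q : MvPolynomial σ ℝ, q.totalDegree ≤ Q.totalDegree ∧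
      ∀ y : σ → ℝ, eval y q = RCLike.re (eval (fun i => (y i : K)) Q) := by
  refine ⟨∑ α ∈ Q.support, monomial α (RCLike.re (Q.coeff α)),
    totalDegree_finsetSum_le fun α hα => (totalDegree_monomial_le _ _).trans (le_totalDegree hα),
    fun y => ?_⟩
  conv_rhs => rw [Q.as_sum]
  simp only [map_sum]
  refine Finset.sum_congr rfl fun α _ => ?_
  simp only [eval_monomial, Finsupp.prod]
  rw [← RCLike.re_mul_ofReal]
  push_cast
  rfl

end MvPolynomial

section TorusAverage

open Complex

theorem integral_exp_int_mul_I (n : ℤ) :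
    ∫ θ in (0:ℝ)..2 * π, exp (n * θ * I) = if n = 0 then (2 * π : ℂ) else 0 := by
  rcases eq_or_ne n 0 with rfl | hn
  · simp
  · have hc : (n : ℂ) * I ≠ 0 := by simp [hn, I_ne_zero]
    simp_rw [mul_right_comm _ _ I]
    rw [integral_exp_mul_complex hc,
      show (n : ℂ) * I * ((2 * π : ℝ) : ℂ) = n * (2 * π * I) by push_cast; ring,
      exp_int_mul_two_pi_mul_I]
    simp [hn]

variable {σ : Type*} (w : σ → ℤ) (v : σ → ℂ)

theorem eval_exp_mul_monomial (θ : ℝ) (α : σ →₀ ℕ) (c : ℂ) :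
    eval (fun i => exp (w i * θ * I) * v i) (monomial α c) =
      exp (Finsupp.weight w α * θ * I) * eval v (monomial α c) := by
  simp only [eval_monomial, Finsupp.prod, mul_pow, Finset.prod_mul_distrib,
    ← Complex.exp_nat_mul, ← Complex.exp_sum, Finsupp.weight_apply, Finsupp.sum, nsmul_eq_mul]
  push_cast
  rw [Finset.sum_mul, Finset.sum_mul]
  simp only [mul_assoc]
  ring

theorem integral_eval_exp_mul (g : MvPolynomial σ ℂ) :
    ∫ θ in (0:ℝ)..2 * π, eval (fun i => exp (w i * θ * I) * v i) g =
      2 * π * eval v (weightedHomogeneousComponent w 0 g) := by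
  classical
  conv_lhs => rw [g.as_sum]
  simp only [map_sum, eval_exp_mul_monomial]
  rw [intervalIntegral.integral_finsetSum fun α _ =>
    (Continuous.intervalIntegrable (by fun_prop) _ _)]
  simp only [intervalIntegral.integral_mul_const, integral_exp_int_mul_I,
    weightedHomogeneousComponent_apply, Finset.sum_filter, map_sum, Finset.mul_sum]
  refine Finset.sum_congr rfl fun α _ => ?_
  split_ifs <;> simp

end TorusAverage

section Hopf

open Complex

/-- The coordinates `(a, ā, b, b̄)` of `x`, where `a = x₀ + i x₁` and `b = x₂ + i x₃`. -/
def hopfCoords (x : Fin 4 → ℝ) : Fin 4 → ℂ :=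
  ![⟨x 0, x 1⟩, ⟨x 0, -x 1⟩, ⟨x 2, x 3⟩, ⟨x 2, -x 3⟩]

noncomputable def realCoordsPoly : Fin 4 → MvPolynomial (Fin 4) ℂ :=
  ![C (1 / 2) * (X 0 + X 1), C (-I / 2) * (X 0 - X 1),
    C (1 / 2) * (X 2 + X 3), C (-I / 2) * (X 2 - X 3)]

def fiberWeight : Fin 4 → ℤ := ![1, -1, 1, -1]

theorem isHomogeneous_realCoordsPoly (i : Fin 4) : (realCoordsPoly i).IsHomogeneous 1 := by
  fin_cases i <;> simp only [realCoordsPoly, Fin.zero_eta, Fin.mk_one, Fin.reduceFinMk,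
    Matrix.cons_val]
  · exact ((isHomogeneous_X _ _).add (isHomogeneous_X _ _)).C_mul _
  · exact ((isHomogeneous_X _ _).sub (isHomogeneous_X _ _)).C_mul _
  · exact ((isHomogeneous_X _ _).add (isHomogeneous_X _ _)).C_mul _
  · exact ((isHomogeneous_X _ _).sub (isHomogeneous_X _ _)).C_mul _

theorem eval_hopfCoords_realCoordsPoly (x : Fin 4 → ℝ) (i : Fin 4) :
    eval (hopfCoords x) (realCoordsPoly i) = x i := by
  fin_cases i <;> apply Complex.ext <;> simp [realCoordsPoly, hopfCoords] <;> ring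

theorem ofReal_eval_eq_eval_hopfCoords (x : Fin 4 → ℝ) (f : MvPolynomial (Fin 4) ℝ) :
    (eval x f : ℂ) = eval (hopfCoords x) (aeval realCoordsPoly f) := by
  rw [eval_aeval]
  simp only [eval_hopfCoords_realCoordsPoly]
  exact (aeval_algebraMap_apply ℂ x f).symm

theorem hopfCoords_hopfRot (x : Fin 4 → ℝ) (θ : ℝ) :
    hopfCoords (hopfRot x θ) = fun i => exp (fiberWeight i * θ * I) * hopfCoords x i := by
  funext i
  fin_cases i <;> apply Complex.ext <;>
    simp [hopfCoords, hopfRot, fiberWeight, exp_re, exp_im] <;> ring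

theorem integral_eval_hopfRot (x : Fin 4 → ℝ) (f : MvPolynomial (Fin 4) ℝ) :
    ((∫ θ in (0:ℝ)..2 * π, eval (hopfRot x θ) f : ℝ) : ℂ) =
      2 * π * eval (hopfCoords x) (weightedHomogeneousComponent fiberWeight 0
        (aeval realCoordsPoly f)) := by
  rw [← integral_eval_exp_mul, ← intervalIntegral.integral_ofReal]
  simp only [ofReal_eval_eq_eval_hopfCoords, hopfCoords_hopfRot]

/-- On `S³`, with `y = hopfMapE x`: `aā = (1 + y₀)/2`, `bb̄ = (1 - y₀)/2`, `ab̄ = (y₁ + i y₂)/2`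
and `āb = (y₁ - i y₂)/2`. -/
noncomputable def hopfQuadric : Fin 4 → MvPolynomial (Fin 3) ℂ :=
  ![C (1 / 2) * (1 + X 0), C (1 / 2) * (1 - X 0),
    C (1 / 2) * (X 1 + C I * X 2), C (1 / 2) * (X 1 - C I * X 2)]

theorem totalDegree_hopfQuadric_le (i : Fin 4) : (hopfQuadric i).totalDegree ≤ 1 := by
  have hCX (c : ℂ) (j : Fin 3) : (C c * X j : MvPolynomial (Fin 3) ℂ).totalDegree ≤ 1 :=
    (isHomogeneous_C_mul_X c j).totalDegree_le
  fin_cases i <;> simp only [hopfQuadric, Fin.zero_eta, Fin.mk_one, Fin.reduceFinMk,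
    Matrix.cons_val] <;> refine (totalDegree_mul _ _).trans ?_ <;> rw [totalDegree_C, zero_add]
  · exact (totalDegree_add _ _).trans (max_le (by simp) (by simp))
  · exact (totalDegree_sub _ _).trans (max_le (by simp) (by simp))
  · exact (totalDegree_add _ _).trans (max_le (by simp) (hCX _ _))
  · exact (totalDegree_sub _ _).trans (max_le (by simp) (hCX _ _))

theorem eval_hopfQuadric {x : Fin 4 → ℝ} (hx : x 0 ^ 2 + x 1 ^ 2 + x 2 ^ 2 + x 3 ^ 2 = 1)
    (i : Fin 4) : eval (fun j => (hopfMapE x j : ℂ)) (hopfQuadric i) =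
      ![hopfCoords x 0 * hopfCoords x 1, hopfCoords x 2 * hopfCoords x 3,
        hopfCoords x 0 * hopfCoords x 3, hopfCoords x 1 * hopfCoords x 2] i := by
  fin_cases i <;> apply Complex.ext <;> simp [hopfQuadric, hopfMapE, hopfCoords, -ofReal_pow]
  all_goals first | linear_combination (-1 / 2 : ℝ) * hx | ring

theorem exists_eval_hopfMapE_eq_eval_monomial (α : Fin 4 →₀ ℕ)
    (hα : Finsupp.weight fiberWeight α = 0) :
    ∃ Q : MvPolynomial (Fin 3) ℂ, Q.totalDegree ≤ (α.sum fun _ e => e) / 2 ∧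
      ∀ x ∈ {x : Fin 4 → ℝ | x 0 ^ 2 + x 1 ^ 2 + x 2 ^ 2 + x 3 ^ 2 = 1},
        eval (fun j => (hopfMapE x j : ℂ)) Q = eval (hopfCoords x) (monomial α 1) := by
  have hbal : α 0 + α 2 = α 1 + α 3 := by
    simp [Finsupp.weight_apply, Finsupp.sum_fintype, Fin.sum_univ_four, fiberWeight] at hα
    omega
  -- `a^p ā^q b^r b̄^s` with `p + r = q + s` is `(aā)^q (bb̄)^r (ab̄)^(p-q)` if `q ≤ p`,
  -- and `(aā)^p (bb̄)^s (āb)^(q-p)` if `p ≤ q`.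
  obtain ⟨k, hk, hkα⟩ : ∃ k : Fin 4 → ℕ, 2 * ∑ i, k i = ∑ i, α i ∧ ∀ z : Fin 4 → ℂ,
      (z 0 * z 1) ^ k 0 * (z 2 * z 3) ^ k 1 * (z 0 * z 3) ^ k 2 * (z 1 * z 2) ^ k 3 =
        ∏ i, z i ^ α i := by
    rcases le_total (α 1) (α 0) with h | h
    · obtain ⟨d, hd⟩ := Nat.exists_eq_add_of_le h
      refine ⟨![α 1, α 2, d, 0], ?_, fun z => ?_⟩
      · simp [Fin.sum_univ_four]; omega
      · simp [Fin.prod_univ_four, hd, show α 3 = α 2 + d by omega]; ring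
    · obtain ⟨d, hd⟩ := Nat.exists_eq_add_of_le h
      refine ⟨![α 0, α 3, 0, d], ?_, fun z => ?_⟩
      · simp [Fin.sum_univ_four]; omega
      · simp [Fin.prod_univ_four, hd, show α 2 = α 3 + d by omega]; ring
  refine ⟨∏ i, hopfQuadric i ^ k i, ?_, fun x hx => ?_⟩
  · calc _ ≤ ∑ i, k i := (totalDegree_finsetProd _ _).trans <| Finset.sum_le_sum fun i _ =>
          (totalDegree_pow _ _).trans
            (by simpa using Nat.mul_le_mul_left (k i) (totalDegree_hopfQuadric_le i))
      _ = _ := by rw [Finsupp.sum_fintype _ _ fun _ => rfl]; omega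
  · rw [map_prod, eval_monomial, one_mul, Finsupp.prod_fintype _ _ fun _ => pow_zero _, ← hkα]
    simp only [map_pow, eval_hopfQuadric hx, Fin.prod_univ_four]
    rfl

theorem exists_fiberAverage_eq_eval_hopfMapE (f : MvPolynomial (Fin 4) ℝ) :
    ∃ q : MvPolynomial (Fin 3) ℝ, q.totalDegree ≤ f.totalDegree / 2 ∧
      ∀ x : Fin 4 → ℝ, x 0 ^ 2 + x 1 ^ 2 + x 2 ^ 2 + x 3 ^ 2 = 1 →
        (1 / (2 * π)) * ∫ θ in (0:ℝ)..(2 * π), eval (hopfRot x θ) f = eval (hopfMapE x) q := by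
  classical
  set g := weightedHomogeneousComponent fiberWeight 0 (aeval realCoordsPoly f) with hg
  obtain ⟨Q, hQ, hgQ⟩ := exists_totalDegree_le_eval_eq_of_monomial g (k := f.totalDegree / 2) _
    hopfCoords (fun x j => (hopfMapE x j : ℂ)) fun α hα => by
      rw [hg, support_weightedHomogeneousComponent, Finset.mem_filter] at hα
      obtain ⟨Q, hQ, hαQ⟩ := exists_eval_hopfMapE_eq_eval_monomial α hα.2
      have hdeg := (le_totalDegree hα.1).trans
        (totalDegree_aeval_le (fun i => (isHomogeneous_realCoordsPoly i).totalDegree_le) f)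
      exact ⟨Q, hQ.trans (Nat.div_le_div_right (by simpa using hdeg)), hαQ⟩
  obtain ⟨q, hq, hQq⟩ := exists_totalDegree_le_eval_eq_re Q
  refine ⟨q, hq.trans hQ, fun x hx => ?_⟩
  have hπ : (π : ℂ) ≠ 0 := ofReal_ne_zero.mpr pi_ne_zero
  calc _ = re (((1 / (2 * π)) * ∫ θ in (0:ℝ)..(2 * π), eval (hopfRot x θ) f : ℝ) : ℂ) :=
        (ofReal_re _).symm
    _ = re (eval (hopfCoords x) g) := by
        push_cast
        rw [integral_eval_hopfRot, ← hg]
        field_simp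
    _ = eval (hopfMapE x) q := by rw [← hgQ x hx, hQq]; rfl

noncomputable def hopfPoly : Fin 3 → MvPolynomial (Fin 4) ℝ :=
  ![X 0 ^ 2 + X 1 ^ 2 - X 2 ^ 2 - X 3 ^ 2, C 2 * (X 0 * X 2 + X 1 * X 3),
    C 2 * (X 1 * X 2 - X 0 * X 3)]

theorem isHomogeneous_hopfPoly (i : Fin 3) : (hopfPoly i).IsHomogeneous 2 := by
  fin_cases i <;> simp only [hopfPoly, Fin.zero_eta, Fin.mk_one, Fin.reduceFinMk, Matrix.cons_val]
  · exact (((isHomogeneous_X_pow _ _).add (isHomogeneous_X_pow _ _)).sub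
      (isHomogeneous_X_pow _ _)).sub (isHomogeneous_X_pow _ _)
  · exact (((isHomogeneous_X _ _).mul (isHomogeneous_X _ _)).add
      ((isHomogeneous_X _ _).mul (isHomogeneous_X _ _))).C_mul _
  · exact (((isHomogeneous_X _ _).mul (isHomogeneous_X _ _)).sub
      ((isHomogeneous_X _ _).mul (isHomogeneous_X _ _))).C_mul _

theorem eval_aeval_hopfPoly (y : Fin 4 → ℝ) (q : MvPolynomial (Fin 3) ℝ) :
    eval y (aeval hopfPoly q) = eval (hopfMapE y) q := by
  rw [eval_aeval, aeval_eq_eval]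
  congr 2
  funext i
  fin_cases i <;> simp [hopfPoly, hopfMapE]

theorem hopfMapE_hopfRot (x : Fin 4 → ℝ) (θ : ℝ) : hopfMapE (hopfRot x θ) = hopfMapE x := by
  have h : ∀ i, hopfMapE (hopfRot x θ) i = (Real.sin θ ^ 2 + Real.cos θ ^ 2) * hopfMapE x i := by
    intro i
    fin_cases i <;> simp [hopfMapE, hopfRot, -Real.sin_sq_add_cos_sq] <;> ring
  funext i
  rw [h, Real.sin_sq_add_cos_sq, one_mul]

end Hopf

/-- fiberwise averaging over Hopf fibers takes the restriction to `S³` of a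
polynomial of degree at most `t` to the restriction to `S²` of a polynomial of degree at
most `⌊t/2⌋`, and moreover `I_π` surjects `P_t(S³)` onto `P_{⌊t/2⌋}(S²)`. -/
theorem fiberwise_average_polynomial (t : ℕ) :
    (∀ f : MvPolynomial (Fin 4) ℝ, f.totalDegree ≤ t →
      ∃ q : MvPolynomial (Fin 3) ℝ, q.totalDegree ≤ t / 2 ∧
        ∀ x : Fin 4 → ℝ, x 0 ^ 2 + x 1 ^ 2 + x 2 ^ 2 + x 3 ^ 2 = 1 →
          (1 / (2 * π)) * ∫ θ in (0:ℝ)..(2 * π), eval (hopfRot x θ) f =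
            eval (hopfMapE x) q) ∧
    (∀ q : MvPolynomial (Fin 3) ℝ, q.totalDegree ≤ t / 2 →
      ∃ f : MvPolynomial (Fin 4) ℝ, f.totalDegree ≤ t ∧
        ∀ x : Fin 4 → ℝ, x 0 ^ 2 + x 1 ^ 2 + x 2 ^ 2 + x 3 ^ 2 = 1 →
          (1 / (2 * π)) * ∫ θ in (0:ℝ)..(2 * π), eval (hopfRot x θ) f =
            eval (hopfMapE x) q) := by
  refine ⟨fun f hf => ?_, fun q hq => ?_⟩
  · obtain ⟨q, hq, hfq⟩ := exists_fiberAverage_eq_eval_hopfMapE f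
    exact ⟨q, hq.trans (Nat.div_le_div_right hf), hfq⟩
  · refine ⟨aeval hopfPoly q, ?_, fun x _ => ?_⟩
    · calc _ ≤ 2 * q.totalDegree :=
            totalDegree_aeval_le (fun i => (isHomogeneous_hopfPoly i).totalDegree_le) q
        _ ≤ t := by omega
    · simp only [eval_aeval_hopfPoly, hopfMapE_hopfRot, intervalIntegral.integral_const,
        smul_eq_mul, sub_zero]
      field_simp
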